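/- arXiv:1412.3852 — 4 statements merged into one kernel-verified Lean document; each statement's English description precedes it below -/
import Mathlib

section
/- Let G = (V, E, w) be a weighted directed graph with positive edge weights and let p be a locally shortest path from x to y with at least two edges, whose first edge is (x,a) and whose last edge is (b,y). Then the weight of p equals w(x,a) + d(a,b) + w(b,y). In particular, any two locally shortest paths from x to y having the same first edge and the same last edge have equal weight. -/
namespace Apasp

/-- A weighted directed graph on a subset of the vertex type `V`. -/
structure WDigraph (V : Type*) where
  verts : Finset V
  edges : Finset (V × V)
  edges_sub : edges ⊆ verts ×ˢ verts
  w : V × V → ℝ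
  w_pos : ∀ e ∈ edges, 0 < w e

namespace WDigraph

variable {V : Type*}

/-- The list of consecutive vertex pairs (edges) of a vertex list. -/
def pathEdges (p : List V) : List (V × V) := p.zip p.tail

/-- `p` is a path of `G` (a nonempty vertex list whose vertices are in `G`
and whose consecutive pairs are edges of `G`). -/
def IsPath (G : WDigraph V) (p : List V) : Prop :=
  p ≠ [] ∧ (∀ v ∈ p, v ∈ G.verts) ∧ ∀ e ∈ pathEdges p, e ∈ G.edges

/-- The weight of a path: the sum of the weights of its edges. -/
def weight (G : WDigraph V) (p : List V) : ℝ :=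
  ((pathEdges p).map G.w).sum

/-- `p` is a path of `G` from `x` to `y`. -/
def IsPathFT (G : WDigraph V) (p : List V) (x y : V) : Prop :=
  G.IsPath p ∧ p.head? = some x ∧ p.getLast? = some y

/-- `p` is a shortest path of `G` from `x` to `y`. -/
def IsSPFT (G : WDigraph V) (p : List V) (x y : V) : Prop :=
  G.IsPathFT p x y ∧ ∀ q, G.IsPathFT q x y → G.weight p ≤ G.weight q

/-- `p` is a shortest path of `G` (between its endpoints). -/
def IsSP (G : WDigraph V) (p : List V) : Prop :=
  ∃ x y, G.IsSPFT p x y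

/-- The shortest-path distance from `x` to `y` in `G`. -/
noncomputable def dist (G : WDigraph V) (x y : V) : ℝ :=
  sInf {r | ∃ p, G.IsPathFT p x y ∧ G.weight p = r}

/-- `p` is a locally shortest path from `x` to `y`: removing the first edge,
resp. the last edge, yields a shortest path. -/
def IsLSP (G : WDigraph V) (p : List V) (x y : V) : Prop :=
  G.IsPathFT p x y ∧ G.IsSP p.tail ∧ G.IsSP p.dropLast

/-- The first edge of the list `p` is `(x, a)`. -/
def FirstEdge (p : List V) (x a : V) : Prop := ∃ q, p = x :: a :: q

/-- The last edge of the list `p` is `(b, y)`. -/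
def LastEdge (p : List V) (b y : V) : Prop := ∃ r, p = r ++ [b, y]

/-- `((x,a),(b,y),wt)` is a locally shortest tuple of `G`. -/
def IsLST (G : WDigraph V) (x a b y : V) (wt : ℝ) : Prop :=
  ∃ p, G.IsLSP p x y ∧ FirstEdge p x a ∧ LastEdge p b y ∧ G.weight p = wt

/-- `((x,a),(b,y),wt)` is a locally shortest tuple of `G`, witnessed by a
locally shortest path containing the vertex `v`. -/
def IsLSTThru (G : WDigraph V) (v x a b y : V) (wt : ℝ) : Prop :=
  ∃ p, G.IsLSP p x y ∧ FirstEdge p x a ∧ LastEdge p b y ∧ G.weight p = wt ∧ v ∈ p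

/-- The set of edges of `G` that lie on shortest paths through the vertex `v`. -/
def spEdgesThru (G : WDigraph V) (v : V) : Set (V × V) :=
  {e | ∃ p, G.IsSP p ∧ v ∈ p ∧ e ∈ pathEdges p}

/-- `ν*(G)`: the maximum over vertices `v` of the number of distinct edges
lying on shortest paths through `v`. -/
noncomputable def nuStar (G : WDigraph V) : ℕ :=
  G.verts.sup fun v => (G.spEdgesThru v).ncard

/-- `m*(G)`: the number of edges of `G` lying on at least one shortest path. -/
noncomputable def mStar (G : WDigraph V) : ℕ :=
  {e | ∃ p, G.IsSP p ∧ e ∈ pathEdges p}.ncard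

/-- The induced weighted subgraph of `G` on the vertex set `S`. -/
def induce [DecidableEq V] (G : WDigraph V) (S : Finset V) : WDigraph V where
  verts := G.verts ∩ S
  edges := G.edges.filter fun e => e.1 ∈ S ∧ e.2 ∈ S
  edges_sub := by
    intro e he
    rw [Finset.mem_filter] at he
    have h := G.edges_sub he.1
    rw [Finset.mem_product] at h ⊢
    exact ⟨Finset.mem_inter.mpr ⟨h.1, he.2.1⟩, Finset.mem_inter.mpr ⟨h.2, he.2.2⟩⟩
  w := G.w
  w_pos := fun e he => G.w_pos e (Finset.mem_filter.mp he).1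

/-- Two weighted digraphs coincide: same vertices, same edges, and the same
weights on the edges. -/
def Coincide (G H : WDigraph V) : Prop :=
  G.verts = H.verts ∧ G.edges = H.edges ∧ ∀ e ∈ G.edges, G.w e = H.w e

end WDigraph

open WDigraph

lemma pathEdges_cons_cons {V : Type*} (u v : V) (l : List V) :
    pathEdges (u :: v :: l) = (u, v) :: pathEdges (v :: l) := rfl

lemma pathEdges_append_cons {V : Type*} (l1 : List V) (c : V) (l2 : List V) :
    pathEdges (l1 ++ c :: l2) = pathEdges (l1 ++ [c]) ++ pathEdges (c :: l2) := by
  induction l1 with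
  | nil => simp [pathEdges]
  | cons d t ih =>
    cases t with
    | nil => rfl
    | cons e t' =>
      simp only [List.cons_append] at ih ⊢
      rw [pathEdges_cons_cons, pathEdges_cons_cons, ih]
      rfl

lemma weight_cons_cons {V : Type*} (G : WDigraph V) (u v : V) (l : List V) :
    G.weight (u :: v :: l) = G.w (u, v) + G.weight (v :: l) := by
  simp [WDigraph.weight, pathEdges_cons_cons]

lemma key_lsp_weight {V : Type*} (G : WDigraph V) (x a b y : V) (p : List V)
    (hp : G.IsLSP p x y) (hfirst : FirstEdge p x a) (hlast : LastEdge p b y)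
    (hlen : 3 ≤ p.length) :
    G.weight p = G.w (x, a) + G.dist a b + G.w (b, y) := by
  obtain ⟨q, hq⟩ := hfirst
  obtain ⟨r, hr⟩ := hlast
  cases r with
  | nil => rw [hr] at hlen; simp at hlen
  | cons r0 s =>
    have h1 : x :: a :: q = r0 :: (s ++ [b, y]) := by
      rw [← hq, hr, List.cons_append]
    injection h1 with hx0 h2
    subst hx0
    set m : List V := s ++ [b] with hm
    have hmy : m ++ [y] = a :: q := by
      rw [hm, List.append_assoc]; exact h2.symm
    have hpm : p = x :: (m ++ [y]) := by rw [hq, hmy]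
    have hmne : m ≠ [] := by simp [hm]
    obtain ⟨h0, t, hmt0⟩ := List.exists_cons_of_ne_nil hmne
    have hmt : m = a :: t := by
      have hh : h0 = a := by
        have h3 := hmy
        rw [hmt0, List.cons_append] at h3
        injection h3
      rw [hmt0, hh]
    -- key pathEdges identity
    have hPE : pathEdges p = (x, a) :: (pathEdges m ++ [(b, y)]) := by
      rw [hr, pathEdges_append_cons (x :: s) b [y]]
      have : (x :: s) ++ [b] = x :: m := by rw [hm, List.cons_append]
      rw [this, hmt, pathEdges_cons_cons, ← hmt]
      rfl
    have hwp : G.weight p = G.w (x, a) + G.weight m + G.w (b, y) := by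
      simp [WDigraph.weight, hPE]
      ring
    obtain ⟨⟨hpne, hpv, hpe⟩, hph, hpl⟩ := hp.1
    have hxa : (x, a) ∈ G.edges := hpe _ (by rw [hPE]; simp)
    have hxv : x ∈ G.verts := hpv x (by rw [hpm]; simp)
    have hmb : m.getLast? = some b := by simp [hm]
    have hmpath : G.IsPathFT m a b := by
      refine ⟨⟨hmne, ?_, ?_⟩, by simp [hmt], hmb⟩
      · intro v hv; exact hpv v (by rw [hpm]; simp [hv])
      · intro e he; exact hpe e (by rw [hPE]; simp [he])
    obtain ⟨x', b', ⟨hft', hmin⟩⟩ := hp.2.2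
    have hdl : p.dropLast = x :: m := by
      rw [hpm, show x :: (m ++ [y]) = (x :: m) ++ [y] from rfl,
        List.dropLast_concat]
    have hx' : x' = x := by
      have h := hft'.2.1; rw [hdl] at h; simp at h; exact h.symm
    have hb' : b' = b := by
      have h := hft'.2.2; rw [hdl, hmt, List.getLast?_cons_cons, ← hmt, hmb] at h
      injection h with h; exact h.symm
    rw [hx', hb'] at hmin
    have hlow : ∀ r ∈ {r | ∃ q, G.IsPathFT q a b ∧ G.weight q = r},
        G.weight m ≤ r := by
      rintro r ⟨q', ⟨⟨hq'ne, hq'v, hq'e⟩, hq'h, hq'l⟩, rfl⟩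
      obtain ⟨h0', t', hq't1⟩ := List.exists_cons_of_ne_nil hq'ne
      have hq't0 : q' = a :: t' := by
        have hh : h0' = a := by rw [hq't1] at hq'h; simp at hq'h; exact hq'h
        rw [hq't1, hh]
      have hxq' : G.IsPathFT (x :: q') x b := by
        refine ⟨⟨by simp, ?_, ?_⟩, rfl, ?_⟩
        · intro v hv
          rcases List.mem_cons.mp hv with rfl | hv
          · exact hxv
          · exact hq'v v hv
        · intro e he
          rw [hq't0, pathEdges_cons_cons] at he
          rcases List.mem_cons.mp he with rfl | he
          · exact hxa
          · exact hq'e e (by rw [hq't0]; exact he)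
        · rw [hq't0, List.getLast?_cons_cons, ← hq't0]; exact hq'l
      have h2 := hmin (x :: q') hxq'
      rw [hdl, hmt, weight_cons_cons, ← hmt, hq't0, weight_cons_cons, ← hq't0] at h2
      linarith
    have hmem : G.weight m ∈ {r | ∃ q, G.IsPathFT q a b ∧ G.weight q = r} :=
      ⟨m, hmpath, rfl⟩
    have hdist : G.dist a b = G.weight m := by
      rw [WDigraph.dist]
      exact le_antisymm (csInf_le ⟨G.weight m, hlow⟩ hmem) (le_csInf ⟨_, hmem⟩ hlow)
    rw [hwp, hdist]

open WDigraph in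
/-- A locally shortest path `p` from `x` to `y` with at least two edges,
first edge `(x,a)` and last edge `(b,y)` has weight `w(x,a) + d(a,b) + w(b,y)`;
in particular any two such locally shortest paths have equal weight. -/
theorem stmt2 {V : Type*} (G : WDigraph V) (x a b y : V) (p : List V)
    (hp : G.IsLSP p x y) (hfirst : FirstEdge p x a) (hlast : LastEdge p b y)
    (hlen : 3 ≤ p.length) :
    G.weight p = G.w (x, a) + G.dist a b + G.w (b, y) ∧
      ∀ p' : List V, G.IsLSP p' x y → FirstEdge p' x a → LastEdge p' b y →
        3 ≤ p'.length → G.weight p' = G.weight p := by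
  have h1 := key_lsp_weight G x a b y p hp hfirst hlast hlen
  exact ⟨h1, fun p' hp' hf' hl' hlen' => by
    rw [key_lsp_weight G x a b y p' hp' hf' hl' hlen', h1]⟩

end Apasp
end

section
/- Let V be a finite set and let G_0, G_1, …, G_T be weighted directed graphs, each on a subset of V with positive edge weights, such that for every i ∈ {1,…,T} there is a vertex v_i with the property that the induced weighted subgraphs of G_{i−1} and of G_i on V ∖ {v_i} coincide. For t' ≤ t'', let Γ_{t',t''} denote the induced weighted subgraph of G_{t'} on the vertices of G_{t'} other than v_{t'+1}, …, v_{t''}. Let t' ≤ t̂ ≤ t'' and let p be a shortest path in G_{t̂} none of whose vertices belongs to {v_{t'+1}, …, v_{t''}}. Then p is a path of Γ_{t',t''} and is a shortest path in Γ_{t',t''}. -/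
namespace Apasp

namespace WDigraph

variable {V : Type*}

lemma mem_of_pathEdges' {p : List V} {e : V × V} (he : e ∈ pathEdges p) :
    e.1 ∈ p ∧ e.2 ∈ p := by
  unfold pathEdges at he
  obtain ⟨a, b⟩ := e
  obtain ⟨h1, h2⟩ := List.of_mem_zip he
  exact ⟨h1, List.mem_of_mem_tail h2⟩

lemma Coincide.refl' (G : WDigraph V) : Coincide G G :=
  ⟨rfl, rfl, fun _ _ => rfl⟩

lemma Coincide.symm' {G H : WDigraph V} (h : Coincide G H) : Coincide H G :=
  ⟨h.1.symm, h.2.1.symm, fun e hE => (h.2.2 e (h.2.1 ▸ hE)).symm⟩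

lemma Coincide.trans' {G H K : WDigraph V} (h1 : Coincide G H) (h2 : Coincide H K) :
    Coincide G K :=
  ⟨h1.1.trans h2.1, h1.2.1.trans h2.2.1,
    fun e he => (h1.2.2 e he).trans (h2.2.2 e (h1.2.1 ▸ he))⟩

lemma Coincide.weight_eq' {G H : WDigraph V} (h : Coincide G H) {p : List V}
    (hp : ∀ e ∈ pathEdges p, e ∈ G.edges) : G.weight p = H.weight p := by
  unfold weight
  congr 1
  exact List.map_congr_left fun e he => h.2.2 e (hp e he)

lemma Coincide.isPathFT' {G H : WDigraph V} (h : Coincide G H) {p : List V} {x y : V}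
    (hp : G.IsPathFT p x y) : H.IsPathFT p x y :=
  ⟨⟨hp.1.1, fun z hz => h.1 ▸ hp.1.2.1 z hz, fun e he => h.2.1 ▸ hp.1.2.2 e he⟩,
    hp.2.1, hp.2.2⟩

lemma Coincide.isSPFT' {G H : WDigraph V} (h : Coincide G H) {p : List V} {x y : V}
    (hp : G.IsSPFT p x y) : H.IsSPFT p x y := by
  refine ⟨h.isPathFT' hp.1, fun q hq => ?_⟩
  have hq' := h.symm'.isPathFT' hq
  have := hp.2 q hq'
  rwa [h.weight_eq' hp.1.1.2.2, h.weight_eq' hq'.1.2.2] at this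

lemma coincide_induce_subset' [DecidableEq V] {G H : WDigraph V} {A B : Finset V}
    (h : Coincide (G.induce A) (H.induce A)) (hBA : B ⊆ A) :
    Coincide (G.induce B) (H.induce B) := by
  have hv : G.verts ∩ A = H.verts ∩ A := h.1
  have he : G.edges.filter (fun e => e.1 ∈ A ∧ e.2 ∈ A)
      = H.edges.filter (fun e => e.1 ∈ A ∧ e.2 ∈ A) := h.2.1
  refine ⟨?_, ?_, ?_⟩
  · show G.verts ∩ B = H.verts ∩ B
    ext z
    simp only [Finset.mem_inter]
    constructor
    · rintro ⟨hz, hzB⟩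
      have : z ∈ H.verts ∩ A := hv ▸ Finset.mem_inter.mpr ⟨hz, hBA hzB⟩
      exact ⟨(Finset.mem_inter.mp this).1, hzB⟩
    · rintro ⟨hz, hzB⟩
      have : z ∈ G.verts ∩ A := hv.symm ▸ Finset.mem_inter.mpr ⟨hz, hBA hzB⟩
      exact ⟨(Finset.mem_inter.mp this).1, hzB⟩
  · show G.edges.filter (fun e => e.1 ∈ B ∧ e.2 ∈ B)
        = H.edges.filter (fun e => e.1 ∈ B ∧ e.2 ∈ B)
    ext e
    simp only [Finset.mem_filter]
    constructor
    · rintro ⟨hz, h1, h2⟩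
      have : e ∈ H.edges.filter (fun e => e.1 ∈ A ∧ e.2 ∈ A) :=
        he ▸ Finset.mem_filter.mpr ⟨hz, hBA h1, hBA h2⟩
      exact ⟨(Finset.mem_filter.mp this).1, h1, h2⟩
    · rintro ⟨hz, h1, h2⟩
      have : e ∈ G.edges.filter (fun e => e.1 ∈ A ∧ e.2 ∈ A) :=
        he.symm ▸ Finset.mem_filter.mpr ⟨hz, hBA h1, hBA h2⟩
      exact ⟨(Finset.mem_filter.mp this).1, h1, h2⟩
  · intro e heB
    have heB' := Finset.mem_filter.mp heB
    exact h.2.2 e (Finset.mem_filter.mpr ⟨heB'.1, hBA heB'.2.1, hBA heB'.2.2⟩)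

lemma isSPFT_induce' [DecidableEq V] {G : WDigraph V} {A : Finset V} {p : List V} {x y : V}
    (hp : G.IsSPFT p x y) (hA : ∀ z ∈ p, z ∈ A) : (G.induce A).IsSPFT p x y := by
  have hwt : ∀ q : List V, (G.induce A).weight q = G.weight q := fun q => rfl
  refine ⟨⟨⟨hp.1.1.1, fun z hz => Finset.mem_inter.mpr ⟨hp.1.1.2.1 z hz, hA z hz⟩,
      fun e he => Finset.mem_filter.mpr ⟨hp.1.1.2.2 e he,
        hA e.1 (mem_of_pathEdges' he).1, hA e.2 (mem_of_pathEdges' he).2⟩⟩,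
      hp.1.2.1, hp.1.2.2⟩, ?_⟩
  intro q hq
  rw [hwt p, hwt q]
  refine hp.2 q ⟨⟨hq.1.1, fun z hz => (Finset.mem_inter.mp (hq.1.2.1 z hz)).1,
    fun e he => (Finset.mem_filter.mp (hq.1.2.2 e he)).1⟩, hq.2.1, hq.2.2⟩

lemma coincide_induce_verts' [Fintype V] [DecidableEq V] (G : WDigraph V) (S : Finset V) :
    Coincide (G.induce (Finset.univ \ S)) (G.induce (G.verts \ S)) := by
  refine ⟨?_, ?_, fun _ _ => rfl⟩
  · show G.verts ∩ (Finset.univ \ S) = G.verts ∩ (G.verts \ S)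
    ext z
    simp only [Finset.mem_inter, Finset.mem_sdiff, Finset.mem_univ, true_and]
    tauto
  · show G.edges.filter (fun e => e.1 ∈ Finset.univ \ S ∧ e.2 ∈ Finset.univ \ S)
        = G.edges.filter (fun e => e.1 ∈ G.verts \ S ∧ e.2 ∈ G.verts \ S)
    apply Finset.filter_congr
    intro e he
    have := Finset.mem_product.mp (G.edges_sub he)
    simp only [Finset.mem_sdiff, Finset.mem_univ, true_and, this.1, this.2]

end WDigraph

open WDigraph in
/-- If consecutive graphs `G (i-1)`, `G i` coincide off the updated vertex
`v i`, and `p` is a shortest path of `G t̂` (`t' ≤ t̂ ≤ t''`) avoiding the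
vertices `v (t'+1), …, v t''`, then `p` is a (shortest) path of the prior
deletion graph `Γ_{t',t''}`. -/
theorem stmt5 {V : Type*} [Fintype V] [DecidableEq V] (T : ℕ)
    (G : ℕ → WDigraph V) (v : ℕ → V)
    (hcoin : ∀ i ∈ Finset.Icc 1 T,
      Coincide ((G (i - 1)).induce (Finset.univ \ {v i}))
        ((G i).induce (Finset.univ \ {v i})))
    (t' tHat t'' : ℕ) (h1 : t' ≤ tHat) (h2 : tHat ≤ t'') (h3 : t'' ≤ T)
    (p : List V) (x y : V) (hp : (G tHat).IsSPFT p x y)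
    (havoid : ∀ z ∈ p, z ∉ (Finset.Icc (t' + 1) t'').image v) :
    ((G t').induce ((G t').verts \ (Finset.Icc (t' + 1) t'').image v)).IsPathFT p x y ∧
      ((G t').induce ((G t').verts \ (Finset.Icc (t' + 1) t'').image v)).IsSPFT p x y := by
  set S : Finset V := (Finset.Icc (t' + 1) t'').image v with hS
  -- chain of coincidences from t' up to tHat on `univ \ S`
  have hchain : ∀ t, t' ≤ t → t ≤ t'' →
      Coincide ((G t').induce (Finset.univ \ S)) ((G t).induce (Finset.univ \ S)) := by
    intro t ht
    induction t, ht using Nat.le_induction with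
    | base => exact fun _ => Coincide.refl' _
    | succ t ht ih =>
      intro hts
      have hvS : v (t + 1) ∈ S :=
        Finset.mem_image_of_mem v (Finset.mem_Icc.mpr ⟨by omega, hts⟩)
      have hsub : Finset.univ \ S ⊆ Finset.univ \ ({v (t + 1)} : Finset V) := by
        intro z hz
        simp only [Finset.mem_sdiff, Finset.mem_univ, true_and,
          Finset.mem_singleton] at hz ⊢
        rintro rfl; exact hz hvS
      have hc := hcoin (t + 1) (Finset.mem_Icc.mpr ⟨by omega, by omega⟩)
      simp only [Nat.add_sub_cancel] at hc
      exact (ih (by omega)).trans' (coincide_induce_subset' hc hsub)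
  have hco : Coincide ((G tHat).induce (Finset.univ \ S))
      ((G t').induce (Finset.univ \ S)) := (hchain tHat h1 h2).symm'
  have hsp : ((G tHat).induce (Finset.univ \ S)).IsSPFT p x y :=
    isSPFT_induce' hp fun z hz => by
      simp only [Finset.mem_sdiff, Finset.mem_univ, true_and]
      exact havoid z hz
  have hfinal : ((G t').induce ((G t').verts \ S)).IsSPFT p x y :=
    ((coincide_induce_verts' (G t') S).isSPFT' (hco.isSPFT' hsp))
  exact ⟨hfinal.1, hfinal⟩

end Apasp
end

section
/- Fix an integer t ≥ 1, a finite set V, and a function u : {1,…,t} → V (u(s) is the vertex receiving the real update at step s). Say that a vertex x is updated at step t' ∈ {1,…,t} if x = u(s) for some s ∈ D(t') with s ≥ 1. Then for every vertex x that is updated at some step in {1,…,t}, the largest step t' ≤ t at which x is updated belongs to Prior-times(t). -/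
/-!
The blocks `D c`, for `c` running through the prior times `t = c₀ > c₁ > ⋯ > 0` of `t` (each
`cₖ₊₁ = cₖ - 2 ^ setBit cₖ` clears the lowest bit of `cₖ`), tile `(0, t]`, and they are dyadic
intervals: a block `D t'` with `t' ≤ t` never straddles two of them. So `D t'` lies inside the
block `D c` of some prior time `c ≥ t'`. An update at step `t'` is then also an update at step
`c`, and maximality of `t'` forces `t' = c`.
-/

namespace Apasp

/-- `setBit t`: the position of the least significant 1 in the binary
representation of `t`, i.e. the largest `k` with `2^k ∣ t` (for `t ≥ 1`). -/
def setBit (t : ℕ) : ℕ := Nat.findGreatest (fun k => 2 ^ k ∣ t) t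

/-- `D t = {t - 2^(setBit t) + 1, …, t}`. -/
def D (t : ℕ) : Finset ℕ := Finset.Icc (t - 2 ^ setBit t + 1) t

/-- `priorTimes t`: the set of numbers obtained from `t` by choosing a bit
position `i` at which `t` has a 1 and zeroing all bits below position `i`. -/
def priorTimes (t : ℕ) : Finset ℕ :=
  ((Finset.range (t + 1)).filter fun i => t.testBit i).image fun i => 2 ^ i * (t / 2 ^ i)

lemma pow_setBit_dvd (t : ℕ) : 2 ^ setBit t ∣ t :=
  Nat.findGreatest_spec (P := fun k => 2 ^ k ∣ t) (Nat.zero_le t) (by simp)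

lemma not_pow_setBit_succ_dvd {t : ℕ} (ht : t ≠ 0) : ¬ 2 ^ (setBit t + 1) ∣ t := by
  intro h
  have hle : setBit t + 1 ≤ t :=
    (Nat.lt_two_pow_self).le.trans (Nat.le_of_dvd (Nat.pos_of_ne_zero ht) h)
  exact Nat.findGreatest_is_greatest (Nat.lt_succ_self _) hle h

lemma exists_eq_two_pow_setBit_mul_odd {t : ℕ} (ht : t ≠ 0) :
    ∃ q, t = 2 ^ setBit t * (2 * q + 1) := by
  obtain ⟨k, hk⟩ := pow_setBit_dvd t
  obtain ⟨q, rfl⟩ : Odd k := by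
    refine Nat.not_even_iff_odd.mp fun ⟨c, hc⟩ => not_pow_setBit_succ_dvd ht ⟨c, ?_⟩
    conv_lhs => rw [hk, hc]
    ring
  exact ⟨q, hk⟩

lemma testBit_sub_two_pow_setBit {t : ℕ} (ht : t ≠ 0) (i : ℕ) :
    (t - 2 ^ setBit t).testBit i = (decide (setBit t < i) && t.testBit i) := by
  obtain ⟨q, hq⟩ := exists_eq_two_pow_setBit_mul_odd ht
  generalize setBit t = b at hq ⊢
  subst hq
  have hsub : 2 ^ b * (2 * q + 1) - 2 ^ b = 2 ^ b * (2 * q) := by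
    rw [mul_add, mul_one, Nat.add_sub_cancel]
  rw [hsub, Nat.testBit_two_pow_mul, Nat.testBit_two_pow_mul]
  rcases lt_trichotomy i b with hi | rfl | hi
  · simp [hi.not_ge]
  · simp
  · obtain ⟨k, hk⟩ : ∃ k, i - b = k + 1 := ⟨i - b - 1, by omega⟩
    simp [hi, hi.le, hk, Nat.testBit_add_one, Nat.mul_add_div]

lemma mem_priorTimes_self {t : ℕ} (ht : t ≠ 0) : t ∈ priorTimes t := by
  obtain ⟨q, hq⟩ := exists_eq_two_pow_setBit_mul_odd ht
  have hbit : t.testBit (setBit t) = true := by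
    nth_rw 1 [hq]
    simp [Nat.testBit_two_pow_mul]
  have hlt : setBit t < t + 1 :=
    Nat.lt_succ_of_lt (Nat.lt_two_pow_self.trans_le (Nat.le_of_dvd (by omega) (pow_setBit_dvd t)))
  simp only [priorTimes, Finset.mem_image, Finset.mem_filter, Finset.mem_range]
  exact ⟨setBit t, ⟨hlt, hbit⟩, Nat.mul_div_cancel' (pow_setBit_dvd t)⟩

lemma priorTimes_sub_two_pow_setBit_subset {t : ℕ} (ht : t ≠ 0) :
    priorTimes (t - 2 ^ setBit t) ⊆ priorTimes t := by
  intro y hy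
  simp only [priorTimes, Finset.mem_image, Finset.mem_filter, Finset.mem_range] at hy ⊢
  obtain ⟨i, ⟨hi, hbit⟩, rfl⟩ := hy
  rw [testBit_sub_two_pow_setBit ht, Bool.and_eq_true, decide_eq_true_eq] at hbit
  have hdiv : (t - 2 ^ setBit t) / 2 ^ i = t / 2 ^ i := Nat.eq_of_testBit_eq fun j => by
    rw [Nat.testBit_div_two_pow, Nat.testBit_div_two_pow, testBit_sub_two_pow_setBit ht]
    simp [show setBit t < j + i by omega]
  exact ⟨i, ⟨hi.trans_le (Nat.succ_le_succ (Nat.sub_le _ _)), hbit.2⟩, by rw [hdiv]⟩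

lemma le_of_mem_priorTimes {t c : ℕ} (hc : c ∈ priorTimes t) : c ≤ t := by
  simp only [priorTimes, Finset.mem_image] at hc
  obtain ⟨i, -, rfl⟩ := hc
  exact Nat.mul_div_le t _

/-- With `b = setBit t`: `t - 2 ^ b` is a multiple of `2 ^ (b + 1)`, so `(t - 2 ^ b, t]` contains no such multiple;
hence `2 ^ setBit t' ∣ 2 ^ b` and `D t'` cannot reach below `t - 2 ^ b`. -/
lemma D_subset_D_of_sub_two_pow_setBit_lt {t t' : ℕ} (h't : t' ≤ t)
    (hlt : t - 2 ^ setBit t < t') : D t' ⊆ D t := by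
  refine Finset.Icc_subset_Icc (Nat.succ_le_succ ?_) h't
  obtain ⟨q, hq⟩ := exists_eq_two_pow_setBit_mul_odd (t := t) (by omega)
  generalize setBit t = b at hq hlt ⊢
  subst hq
  have hsub : 2 ^ b * (2 * q + 1) - 2 ^ b = 2 ^ (b + 1) * q := by
    rw [mul_add, mul_one, Nat.add_sub_cancel, pow_succ]
    ring
  rw [hsub] at hlt ⊢
  have hj : setBit t' ≤ b := by
    by_contra! hj
    have hdvd : 2 ^ (b + 1) ∣ t' := (pow_dvd_pow 2 hj).trans (pow_setBit_dvd t')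
    have : 2 ^ b * (2 * q + 1) < 2 ^ (b + 1) * q + 2 ^ (b + 1) := by
      rw [pow_succ]
      nlinarith [Nat.one_le_two_pow (n := b)]
    have := Nat.le_of_lt_add_of_dvd (by omega) hdvd (dvd_mul_right _ q)
    omega
  have hdvd : 2 ^ setBit t' ∣ 2 ^ (b + 1) * q :=
    (pow_dvd_pow 2 (hj.trans b.le_succ)).trans (dvd_mul_right _ q)
  by_contra! hlow
  have := Nat.le_of_lt_add_of_dvd (by omega) (pow_setBit_dvd t') hdvd
  omega

lemma exists_mem_priorTimes_le_and_D_subset {t t' : ℕ} (ht' : 0 < t') (h't : t' ≤ t) :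
    ∃ c ∈ priorTimes t, t' ≤ c ∧ D t' ⊆ D c := by
  induction t using Nat.strong_induction_on with
  | _ t ih =>
    by_cases hlt : t - 2 ^ setBit t < t'
    · exact ⟨t, mem_priorTimes_self (by omega), h't, D_subset_D_of_sub_two_pow_setBit_lt h't hlt⟩
    · have := Nat.one_le_two_pow (n := setBit t)
      obtain ⟨c, hc, hle, hD⟩ := ih (t - 2 ^ setBit t) (by omega) (by omega)
      exact ⟨c, priorTimes_sub_two_pow_setBit_subset (by omega) hc, hle, hD⟩

theorem stmt6_general {V : Type*} [DecidableEq V] (t : ℕ) (u : ℕ → V) (x : V)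
    (hne : ((Finset.Icc 1 t).filter fun t' => ∃ s ∈ D t', 1 ≤ s ∧ u s = x).Nonempty) :
    ((Finset.Icc 1 t).filter fun t' => ∃ s ∈ D t', 1 ≤ s ∧ u s = x).max' hne
      ∈ priorTimes t := by
  set S := (Finset.Icc 1 t).filter fun t' => ∃ s ∈ D t', 1 ≤ s ∧ u s = x
  obtain ⟨hM, s, hs, hs1, hsx⟩ := Finset.mem_filter.mp (S.max'_mem hne)
  rw [Finset.mem_Icc] at hM
  obtain ⟨c, hc, hMc, hD⟩ := exists_mem_priorTimes_le_and_D_subset hM.1 hM.2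
  have hcS : c ∈ S :=
    Finset.mem_filter.mpr ⟨Finset.mem_Icc.mpr ⟨hM.1.trans hMc, le_of_mem_priorTimes hc⟩,
      s, hD hs, hs1, hsx⟩
  rwa [le_antisymm hMc (S.le_max' c hcS)]

/-- The largest step `t' ≤ t` at which a vertex `x` is updated belongs to
`priorTimes t`. A vertex `x` is updated at step `t'` if `x = u s` for some
`s ∈ D t'` with `s ≥ 1`. -/
theorem stmt6 {V : Type*} [DecidableEq V] (t : ℕ) (ht : 1 ≤ t) (u : ℕ → V) (x : V)
    (hne : ((Finset.Icc 1 t).filter fun t' => ∃ s ∈ D t', 1 ≤ s ∧ u s = x).Nonempty) :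
    ((Finset.Icc 1 t).filter fun t' => ∃ s ∈ D t', 1 ≤ s ∧ u s = x).max' hne
      ∈ priorTimes t :=
  stmt6_general t u x hne

end Apasp
end

section
/- Let G = (V, E, w) be a weighted directed graph with positive edge weights on n = |V| vertices, and let k ≥ 1 be an integer such that for every ordered pair of vertices (x,y) the number of shortest paths from x to y in G is at most k. Then for every vertex v ∈ V, the number of distinct edges that lie on shortest paths through v is at most 2·k·n; in particular ν*(G) ≤ 2kn. -/
/-!
Cut a shortest path through `v` at `v`. An edge `(a, b)` of it lying after `v` is the last edge
of a shortest path from `v` to `b`, and one lying before `v` is the first edge of a shortest path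
from `a` to `v`. Taking the last edge is a map from the at most `k` shortest paths from `v` to `b`
onto the edges of the first kind entering `b`, so there are at most `k n` of them; symmetrically
at most `k n` of the second kind.

The hypothesis bounds `Set.ncard`, which is `0` on infinite sets; it carries information because
positive weights make shortest paths simple, so there are finitely many between two vertices.
-/

namespace Apasp

open Finset

theorem _root_.List.exists_eq_append_cons_append_cons_of_not_nodup {α : Type*} {l : List α}
    (h : ¬l.Nodup) : ∃ a s t u, l = s ++ a :: (t ++ a :: u) := by
  induction l with
  | nil => exact absurd List.nodup_nil h
  | cons b l ih =>
    rw [List.nodup_cons, not_and_or, not_not] at h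
    rcases h with hb | hl
    · obtain ⟨t, u, rfl⟩ := List.append_of_mem hb
      exact ⟨b, [], t, u, rfl⟩
    · obtain ⟨a, s, t, u, rfl⟩ := ih hl
      exact ⟨a, b :: s, t, u, rfl⟩

theorem _root_.List.finite_setOf_nodup_forall_mem {α : Type*} (s : Finset α) :
    {l : List α | l.Nodup ∧ ∀ x ∈ l, x ∈ s}.Finite := by
  refine ((List.finite_length_le s #s).image (List.map Subtype.val)).subset ?_
  rintro l ⟨hnd, hs⟩
  lift l to List s using hs
  refine ⟨l, ?_, rfl⟩
  simpa using (hnd.of_map _).length_le_card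

theorem _root_.Finset.card_le_ncard_of_subset_image {α β : Type*} {s : Finset α} {t : Set β}
    (ht : t.Finite) {f : β → α} (h : ↑s ⊆ f '' t) : #s ≤ t.ncard := by
  rw [← Set.ncard_coe_finset]
  exact (Set.ncard_le_ncard h (ht.image f)).trans (Set.ncard_image_le ht)

namespace WDigraph

variable {V : Type*} {G : WDigraph V}

@[simp]
lemma pathEdges_singleton (a : V) : pathEdges [a] = [] := rfl

@[simp]
lemma pathEdges_cons_cons (a b : V) (l : List V) :
    pathEdges (a :: b :: l) = (a, b) :: pathEdges (b :: l) := rfl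

lemma pathEdges_append_cons (l : List V) (m : V) (r : List V) :
    pathEdges (l ++ m :: r) = pathEdges (l ++ [m]) ++ pathEdges (m :: r) := by
  induction l with
  | nil => rfl
  | cons a l ih => cases l <;> simp_all

lemma exists_eq_append_of_mem_pathEdges {e : V × V} {p : List V} (h : e ∈ pathEdges p) :
    ∃ l r, p = l ++ e.1 :: e.2 :: r := by
  induction p with
  | nil => simp [pathEdges] at h
  | cons a p ih =>
    cases p with
    | nil => simp at h
    | cons b p =>
      rcases List.mem_cons.mp h with rfl | h
      · exact ⟨[], p, rfl⟩
      · obtain ⟨l, r, hlr⟩ := ih h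
        exact ⟨a :: l, r, by rw [hlr]; rfl⟩

lemma getLastD_pathEdges_append_pair (r : List V) (a b : V) (d : V × V) :
    (pathEdges (r ++ [a, b])).getLastD d = (a, b) := by
  rw [pathEdges_append_cons, pathEdges_cons_cons, pathEdges_singleton, List.getLastD_concat]

lemma weight_append_cons (G : WDigraph V) (l : List V) (m : V) (r : List V) :
    G.weight (l ++ m :: r) = G.weight (l ++ [m]) + G.weight (m :: r) := by
  simp [weight, pathEdges_append_cons l m r]

lemma IsPath.weight_pos {p : List V} (hp : G.IsPath p) (he : pathEdges p ≠ []) :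
    0 < G.weight p := by
  refine List.sum_pos _ (fun _ hw => ?_) (by simpa using he)
  obtain ⟨e, he, rfl⟩ := List.mem_map.mp hw
  exact G.w_pos e (hp.2.2 e he)

lemma isPathFT_append_cons_iff {l r : List V} {x m y : V} :
    G.IsPathFT (l ++ m :: r) x y ↔ G.IsPathFT (l ++ [m]) x m ∧ G.IsPathFT (m :: r) m y := by
  unfold IsPathFT IsPath
  grind [pathEdges_append_cons]

lemma IsPathFT.exists_eq_append_singleton {p : List V} {x y : V} (h : G.IsPathFT p x y) :
    ∃ l, p = l ++ [y] :=
  List.getLast?_eq_some_iff.mp h.2.2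

lemma IsSPFT.append_cons {l r : List V} {x m y : V} (h : G.IsSPFT (l ++ m :: r) x y) :
    G.IsSPFT (l ++ [m]) x m ∧ G.IsSPFT (m :: r) m y := by
  obtain ⟨hl, hr⟩ := isPathFT_append_cons_iff.mp h.1
  have hw := G.weight_append_cons l m r
  refine ⟨⟨hl, fun q hq => ?_⟩, ⟨hr, fun q hq => ?_⟩⟩
  · obtain ⟨q, rfl⟩ := hq.exists_eq_append_singleton
    have := h.2 _ (isPathFT_append_cons_iff.mpr ⟨hq, hr⟩)
    linarith [G.weight_append_cons q m r]
  · obtain ⟨q, rfl⟩ := List.head?_eq_some_iff.mp hq.2.1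
    have := h.2 _ (isPathFT_append_cons_iff.mpr ⟨hl, hq⟩)
    linarith [G.weight_append_cons l m q]

lemma IsSPFT.infix {l m r : List V} {x u w y : V} (h : G.IsSPFT (l ++ u :: (m ++ w :: r)) x y) :
    G.IsSPFT (u :: (m ++ [w])) u w := by
  have h' : G.IsSPFT ((u :: m) ++ w :: r) u y := h.append_cons.2
  exact h'.append_cons.1

/-- With positive weights, cutting out a cycle strictly shortens a path. -/
lemma IsSPFT.nodup {p : List V} {x y : V} (h : G.IsSPFT p x y) : p.Nodup := by
  by_contra hp
  obtain ⟨u, l, m, r, rfl⟩ := List.exists_eq_append_cons_append_cons_of_not_nodup hp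
  obtain ⟨hl, hcr⟩ := isPathFT_append_cons_iff.mp h.1
  have hcr' : G.IsPathFT ((u :: m) ++ u :: r) u y := hcr
  obtain ⟨hc, hr⟩ := isPathFT_append_cons_iff.mp hcr'
  have hshort := h.2 _ (isPathFT_append_cons_iff.mpr ⟨hl, hr⟩)
  have hcycle : 0 < G.weight (u :: (m ++ [u])) := hc.1.weight_pos (by cases m <;> simp)
  have hsplit : G.weight (u :: (m ++ u :: r)) = G.weight (u :: (m ++ [u])) + G.weight (u :: r) :=
    G.weight_append_cons (u :: m) u r
  linarith [G.weight_append_cons l u (m ++ u :: r), G.weight_append_cons l u r]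

lemma finite_setOf_isSPFT (G : WDigraph V) (x y : V) : {p | G.IsSPFT p x y}.Finite :=
  (List.finite_setOf_nodup_forall_mem G.verts).subset fun _ hp => ⟨hp.nodup, hp.1.1.2.1⟩

open Classical in
noncomputable def lastEdgesFrom (G : WDigraph V) (v : V) : Finset (V × V) :=
  {e ∈ G.edges | ∃ r, G.IsSPFT (r ++ [e.1, e.2]) v e.2}

open Classical in
noncomputable def firstEdgesTo (G : WDigraph V) (v : V) : Finset (V × V) :=
  {e ∈ G.edges | ∃ q, G.IsSPFT (e.1 :: e.2 :: q) e.1 v}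

lemma spEdgesThru_subset (G : WDigraph V) (v : V) :
    G.spEdgesThru v ⊆ ↑(G.lastEdgesFrom v) ∪ ↑(G.firstEdgesTo v) := by
  rintro e ⟨p, ⟨x, y, hp⟩, hv, he⟩
  have hE : e ∈ G.edges := hp.1.1.2.2 _ he
  obtain ⟨a, b⟩ := e
  obtain ⟨l, r, rfl⟩ := exists_eq_append_of_mem_pathEdges he
  simp only [Set.mem_union, mem_coe, lastEdgesFrom, firstEdgesTo, mem_filter]
  rcases List.mem_append.mp hv with hl | hv
  · obtain ⟨l₁, l₂, rfl⟩ := List.append_of_mem hl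
    have hp' : G.IsSPFT (l₁ ++ v :: ((l₂ ++ [a]) ++ b :: r)) x y := by simpa using hp
    exact .inl ⟨hE, v :: l₂, by simpa using hp'.infix⟩
  rcases List.mem_cons.mp hv with rfl | hv
  · exact .inl ⟨hE, [], hp.infix (m := [])⟩
  rcases List.mem_cons.mp hv with rfl | hr
  · exact .inr ⟨hE, [], hp.infix (m := [])⟩
  · obtain ⟨r₁, r₂, rfl⟩ := List.append_of_mem hr
    have hp' : G.IsSPFT (l ++ a :: ((b :: r₁) ++ v :: r₂)) x y := by simpa using hp
    exact .inr ⟨hE, r₁ ++ [v], hp'.infix⟩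

lemma card_lastEdgesFrom_le {k : ℕ} {v : V} (hk : ∀ y, {p | G.IsSPFT p v y}.ncard ≤ k) :
    #(G.lastEdgesFrom v) ≤ k * #G.verts := by
  classical
  refine card_le_mul_card_image_of_maps_to
    (fun e he => (mem_product.mp (G.edges_sub (mem_filter.mp he).1)).2) k fun y _ => ?_
  refine (card_le_ncard_of_subset_image (G.finite_setOf_isSPFT v y)
    (f := fun p => (pathEdges p).getLastD (v, y)) ?_).trans (hk y)
  rintro ⟨a, b⟩ he
  simp only [coe_filter, mem_filter, Set.mem_ofPred_eq] at he
  obtain ⟨⟨-, r, hr⟩, rfl⟩ := he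
  exact ⟨r ++ [a, b], hr, getLastD_pathEdges_append_pair r a b _⟩

lemma card_firstEdgesTo_le {k : ℕ} {v : V} (hk : ∀ x, {p | G.IsSPFT p x v}.ncard ≤ k) :
    #(G.firstEdgesTo v) ≤ k * #G.verts := by
  classical
  refine card_le_mul_card_image_of_maps_to
    (fun e he => (mem_product.mp (G.edges_sub (mem_filter.mp he).1)).1) k fun x _ => ?_
  refine (card_le_ncard_of_subset_image (G.finite_setOf_isSPFT x v)
    (f := fun p => (pathEdges p).headD (x, v)) ?_).trans (hk x)
  rintro ⟨a, b⟩ he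
  simp only [coe_filter, mem_filter, Set.mem_ofPred_eq] at he
  obtain ⟨⟨-, q, hq⟩, rfl⟩ := he
  exact ⟨a :: b :: q, hq, rfl⟩

end WDigraph

open WDigraph in
theorem stmt15_general {V : Type*} (G : WDigraph V) (n : ℕ) (hn : G.verts.card = n)
    (k : ℕ)
    (hsp : ∀ x y : V, {p : List V | G.IsSPFT p x y}.ncard ≤ k) :
    (∀ v : V, (G.spEdgesThru v).ncard ≤ 2 * k * n) ∧ G.nuStar ≤ 2 * k * n := by
  have hthru (v : V) : (G.spEdgesThru v).ncard ≤ 2 * k * n :=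
    calc (G.spEdgesThru v).ncard
        ≤ (↑(G.lastEdgesFrom v) ∪ ↑(G.firstEdgesTo v) : Set (V × V)).ncard :=
          Set.ncard_le_ncard (G.spEdgesThru_subset v) (by simp)
      _ ≤ #(G.lastEdgesFrom v) + #(G.firstEdgesTo v) := by
          rw [← Set.ncard_coe_finset, ← Set.ncard_coe_finset]
          exact Set.ncard_union_le _ _
      _ ≤ k * n + k * n := by
          rw [← hn]
          exact add_le_add (card_lastEdgesFrom_le (hsp v)) (card_firstEdgesTo_le (hsp · v))
      _ = 2 * k * n := by ring
  exact ⟨hthru, Finset.sup_le fun v _ => hthru v⟩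

open WDigraph in
/-- If every ordered pair of vertices has at most `k` shortest paths, then at
most `2kn` distinct edges lie on shortest paths through any vertex, so
`ν*(G) ≤ 2kn`. -/
theorem stmt15 {V : Type*} (G : WDigraph V) (n : ℕ) (hn : G.verts.card = n)
    (k : ℕ) (hk : 1 ≤ k)
    (hsp : ∀ x y : V, {p : List V | G.IsSPFT p x y}.ncard ≤ k) :
    (∀ v : V, (G.spEdgesThru v).ncard ≤ 2 * k * n) ∧ G.nuStar ≤ 2 * k * n :=
  stmt15_general G n hn k hsp

end Apasp
end
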